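/- Let F be a field, V a 2-dimensional F-vector space, q : V → F a non-degenerate quadratic form and a ∈ F with a ≠ 0. If u, v ∈ V satisfy q(u) = a, q(v) = a and q(u + v) = 0, then u + v = 0. In particular, for the hyperbolic plane H over F, diam(G_{H,a}) ≥ 3. -/

import Mathlib

open QuadraticMap Module

/-- The representation graph `G_{q,a}`: vertices are the vectors of `V`, and distinct
`x, y` are adjacent iff `q (x - y) = a`. -/
def repGraph {F V : Type*} [Field F] [AddCommGroup V] [Module F V]
    (q : QuadraticForm F V) (a : F) : SimpleGraph V where
  Adj x y := x ≠ y ∧ q (x - y) = a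
  symm := by
    constructor
    rintro x y ⟨hxy, h⟩
    refine ⟨hxy.symm, ?_⟩
    rw [← neg_sub x y, QuadraticMap.map_neg]
    exact h
  loopless := by constructor; rintro x ⟨h, -⟩; exact h rfl

/-- The hyperbolic plane `H` on `F²`, i.e. the quadratic form `(x, y) ↦ x * y`. -/
noncomputable def hypPlane (F : Type*) [Field F] : QuadraticForm F (F × F) :=
  LinearMap.BilinMap.toQuadraticMap
    ((LinearMap.mul F F).compl₁₂ (LinearMap.fst F F F) (LinearMap.snd F F F))

theorem hypPlane_apply (F : Type*) [Field F] (v : F × F) : hypPlane F v = v.1 * v.2 := rfl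

/-!
If `q u = q v = a` and `q (u + v) = 0`, then `w = u + v` satisfies
`polar q w u = q w + q u - q v = 0` and likewise `polar q w v = 0`. When `u, v` are
independent they span the plane, so `w` lies in the radical and vanishes; otherwise
`v = c • u` and `0 = q w = (1 + c) ^ 2 * a` forces `w = 0`.

Applied to `x - m` and `m - y`, this says that two distinct vectors with `q (x - y) = 0` are
neither adjacent nor have a common neighbour in `G_{q,a}`. In the hyperbolic plane `(1, 0)` is
such a vector, so its distance from `0` is at least `3`.
-/

namespace QuadraticMap

theorem polar_add_self_left {R M N : Type*} [CommRing R] [AddCommGroup M] [Module R M]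
    [AddCommGroup N] [Module R N] (Q : QuadraticMap R M N) (x y : M) :
    polar Q (x + y) x = Q (x + y) + Q x - Q y := by
  rw [polar_add_left, polar_self, polar, add_comm y x, two_smul]
  abel

section Field

variable {F V : Type*} [Field F] [AddCommGroup V] [Module F V]

theorem eq_zero_of_polar_eq_zero_of_linearIndependent {ι : Type*} [Fintype ι] [Nonempty ι]
    (q : QuadraticForm F V) (hnd : ∀ x : V, (∀ y : V, polar (⇑q) x y = 0) → x = 0)
    {b : ι → V} (hb : LinearIndependent F b) (hcard : Fintype.card ι = finrank F V) {w : V}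
    (hw : ∀ i, polar q w (b i) = 0) : w = 0 := by
  have hzero : polarBilin q w = 0 :=
    LinearMap.ext_on_range (hb.span_eq_top_of_card_eq_finrank hcard) (by simpa using hw)
  exact hnd w fun y => by simpa using LinearMap.congr_fun hzero y

theorem add_eq_zero_of_map_add_eq_zero (q : QuadraticForm F V) (hdim : finrank F V = 2)
    (hnd : ∀ x : V, (∀ y : V, polar (⇑q) x y = 0) → x = 0) {a : F} (ha : a ≠ 0) {u v : V}
    (hu : q u = a) (hv : q v = a) (huv : q (u + v) = 0) : u + v = 0 := by
  have hu0 : u ≠ 0 := by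
    rintro rfl
    exact ha (by simpa using hu.symm)
  by_cases hli : LinearIndependent F ![u, v]
  · refine eq_zero_of_polar_eq_zero_of_linearIndependent q hnd hli (by simp [hdim])
      (Fin.forall_fin_two.mpr ⟨?_, ?_⟩)
    · rw [Matrix.cons_val_zero, polar_add_self_left, hu, hv, huv]
      ring
    · rw [Matrix.cons_val_one, Matrix.cons_val_zero, add_comm u v, polar_add_self_left,
        add_comm v u, hu, hv, huv]
      ring
  · obtain ⟨c, rfl⟩ : ∃ c : F, c • u = v := by
      simpa [LinearIndependent.pair_iff' hu0] using hli
    have hsum : u + c • u = (1 + c) • u := by rw [add_smul, one_smul]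
    rw [hsum, QuadraticMap.map_smul, hu, smul_eq_mul, mul_eq_zero, mul_self_eq_zero] at huv
    rw [hsum, huv.resolve_right ha, zero_smul]

end Field

end QuadraticMap

theorem three_le_edist_repGraph {F V : Type*} [Field F] [AddCommGroup V] [Module F V]
    (q : QuadraticForm F V) (hdim : finrank F V = 2)
    (hnd : ∀ x : V, (∀ y : V, polar (⇑q) x y = 0) → x = 0) {a : F} (ha : a ≠ 0) {x y : V}
    (hxy : x ≠ y) (hq : q (x - y) = 0) : 3 ≤ (repGraph q a).edist x y := by
  refine Order.add_one_le_of_lt (SimpleGraph.two_lt_edist_iff.mpr ⟨hxy, ?_, ?_⟩)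
  · rintro ⟨-, hadj⟩
    exact ha (hadj.symm.trans hq)
  · refine Set.eq_empty_of_forall_notMem fun m hm => ?_
    obtain ⟨⟨-, hxm⟩, hym⟩ := (repGraph q a).mem_commonNeighbors.mp hm
    obtain ⟨-, hmy⟩ := hym.symm
    have hsum := add_eq_zero_of_map_add_eq_zero q hdim hnd ha hxm hmy
      (by rwa [sub_add_sub_cancel])
    exact hxy (sub_eq_zero.mp (by rwa [sub_add_sub_cancel] at hsum))

theorem polar_hypPlane (F : Type*) [Field F] (x y : F × F) :
    polar (hypPlane F) x y = x.1 * y.2 + y.1 * x.2 := by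
  simp only [polar, hypPlane_apply, Prod.fst_add, Prod.snd_add]
  ring

theorem eq_zero_of_forall_polar_hypPlane_eq_zero (F : Type*) [Field F] (x : F × F)
    (hx : ∀ y : F × F, polar (hypPlane F) x y = 0) : x = 0 := by
  have h₁ := hx (1, 0)
  have h₂ := hx (0, 1)
  simp only [polar_hypPlane, mul_zero, mul_one, one_mul, zero_mul, zero_add, add_zero] at h₁ h₂
  exact Prod.ext h₂ h₁

/-- For a 2-dimensional non-degenerate quadratic form `q` and `a ≠ 0`, if `q u = q v = a`
and `q (u + v) = 0` then `u + v = 0`. In particular the representation graph of the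
hyperbolic plane satisfies `diam G_{H,a} ≥ 3`. -/
theorem stmt_7 {F V : Type*} [Field F] [AddCommGroup V] [Module F V]
    (q : QuadraticForm F V) (hdim : Module.finrank F V = 2)
    (hnd : ∀ x : V, (∀ y : V, polar (⇑q) x y = 0) → x = 0)
    (a : F) (ha : a ≠ 0) :
    (∀ u v : V, q u = a → q v = a → q (u + v) = 0 → u + v = 0) ∧
    3 ≤ (repGraph (hypPlane F) a).ediam := by
  refine ⟨fun u v => add_eq_zero_of_map_add_eq_zero q hdim hnd ha, ?_⟩
  calc (3 : ℕ∞) ≤ (repGraph (hypPlane F) a).edist 0 (1, 0) :=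
        three_le_edist_repGraph (hypPlane F) (by simp) (eq_zero_of_forall_polar_hypPlane_eq_zero F)
          ha (by simp [Prod.ext_iff]) (by simp [hypPlane_apply])
    _ ≤ _ := SimpleGraph.edist_le_ediam
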